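/- Let A be a finite abelian group and π : ℕⁿ → A a monoid homomorphism such that the characters π(e_1), …, π(e_n) generate A and the action is 'faithful' in the sense that no proper quotient of A receives a factorization of π. Suppose there is an index j (say j = 1) and an integer m ≥ 2 such that {f ∈ ℕⁿ : π(f) = 0} ⊆ (m,1,…,1)·ℕⁿ, meaning every element of the kernel of π has first coordinate divisible by m. Then the inclusion i : P → ℕⁿ of the kernel monoid P factors as P → ℕⁿ → ℕⁿ where the second map is multiplication by m in the first coordinate; in particular i is not a minimal free resolution. -/
import Mathlib


/-- Converse direction of Proposition 3.3: if every element of the kernel monoid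
`P = {f ∈ ℕⁿ : π f = 0}` has first coordinate divisible by `m ≥ 2`, then the inclusion
`P → ℕⁿ` factors through the map `j : ℕⁿ → ℕⁿ` multiplying the first coordinate by `m`;
in particular (since `j` is not surjective) the inclusion is not a minimal free
resolution. -/
theorem stmt12 (n : ℕ) {A : Type*} [AddCommGroup A] [Fintype A]
    (π : (Fin (n + 1) → ℕ) →+ A)
    (hgen : AddSubgroup.closure (Set.range π) = ⊤)
    (m : ℕ) (hm : 2 ≤ m)
    (hdiv : ∀ f : Fin (n + 1) → ℕ, π f = 0 → m ∣ f 0) :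
    (∀ f : Fin (n + 1) → ℕ, π f = 0 →
        ∃ g : Fin (n + 1) → ℕ, f = fun i => if i = 0 then m * g 0 else g i) ∧
    ¬ Function.Surjective
        (fun (g : Fin (n + 1) → ℕ) => fun i => if i = 0 then m * g 0 else g i) := by
  constructor
  · intro f hf
    obtain ⟨c, hc⟩ := hdiv f hf
    refine ⟨fun i => if i = 0 then c else f i, ?_⟩
    funext i
    by_cases h : i = 0 <;> simp [h, hc]
  · intro hsurj
    obtain ⟨g, hg⟩ := hsurj (fun _ => 1)
    have h0 := congrFun hg 0
    simp at h0
    omega
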